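/- For all positive integers n and m with 2m ≤ n, the number of permutations σ ∈ S_n having at least two cycles of length m is at most n!/(2m²). Consequently, the probability that a uniformly random permutation in S_n has at least two cycles of length m is at most 1/m². -/

import Mathlib

open Filter

noncomputable section

namespace HLC

/-- The parts of a partition in weakly decreasing order, as a list. -/
def sortedParts {n : ℕ} (ν : n.Partition) : List ℕ :=
  (ν.parts.sort (· ≤ ·)).reverse

/-- The `i`-th part (0-indexed) of a partition; `0` if out of range.
In particular `partI ν 0` is the length of the first row. -/
def partI {n : ℕ} (ν : n.Partition) (i : ℕ) : ℕ := (sortedParts ν).getD i 0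

/-- The number of parts, i.e. the length of the first column. -/
def numParts {n : ℕ} (ν : n.Partition) : ℕ := Multiset.card ν.parts

/-- The cells of the Young diagram of a partition (row, column), 0-indexed. -/
def cellsOf {n : ℕ} (ν : n.Partition) : Finset (ℕ × ℕ) :=
  (Finset.range n ×ˢ Finset.range n).filter fun c => c.2 < partI ν c.1

/-- A standard Young tableau on a (possibly skew) cell set `D` with `N` cells:
a filling by `1,…,N`, bijective onto `{1,…,N}`, strictly increasing along rows and
columns, and `0` outside `D`. -/
def IsSkewSYT (D : Finset (ℕ × ℕ)) (N : ℕ) (T : ℕ × ℕ → ℕ) : Prop :=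
  Set.BijOn T ↑D (Set.Icc 1 N) ∧ (∀ c ∉ D, T c = 0) ∧
  (∀ i j₁ j₂, j₁ < j₂ → (i, j₁) ∈ D → (i, j₂) ∈ D → T (i, j₁) < T (i, j₂)) ∧
  (∀ i₁ i₂ j, i₁ < i₂ → (i₁, j) ∈ D → (i₂, j) ∈ D → T (i₁, j) < T (i₂, j))

/-- A standard Young tableau of shape `ν ⊢ n`. -/
def IsSYT {n : ℕ} (ν : n.Partition) (T : ℕ × ℕ → ℕ) : Prop := IsSkewSYT (cellsOf ν) n T

/-- `f^ν` : the number of standard Young tableaux of shape `ν`. -/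
def fSYT {n : ℕ} (ν : n.Partition) : ℕ := Set.ncard {T | IsSYT ν T}

/-- `f^{λ/μ}` : the number of standard Young tableaux of skew shape `λ/μ`
(zero if `μ ⊄ λ`). -/
def fSkew {n m : ℕ} (lam : n.Partition) (μ : m.Partition) : ℕ :=
  if cellsOf μ ⊆ cellsOf lam then
    Set.ncard {T | IsSkewSYT (cellsOf lam \ cellsOf μ) (n - m) T}
  else 0

/-- `i ∈ Des(T)` : the entry `i+1` lies in a strictly lower row than `i`. -/
def IsDescentAt {n : ℕ} (ν : n.Partition) (T : ℕ × ℕ → ℕ) (i : ℕ) : Prop :=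
  ∃ c ∈ cellsOf ν, ∃ c' ∈ cellsOf ν, T c = i ∧ T c' = i + 1 ∧ c.1 < c'.1

open Classical in
/-- The major index of a standard Young tableau. -/
def majT {n : ℕ} (ν : n.Partition) (T : ℕ × ℕ → ℕ) : ℕ :=
  ∑ i ∈ Finset.Ioo 0 n, if IsDescentAt ν T i then i else 0

/-- The number of standard Young tableaux of shape `ν` with `maj ≡ 1 (mod n)`. -/
def countMajOne (n : ℕ) (ν : n.Partition) : ℕ :=
  Set.ncard {T | IsSYT ν T ∧ majT ν T % n = 1}

/-- The Vandermonde determinant `a_δ = ∏_{i<j} (x_i - x_j)`. -/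
def vand (n : ℕ) : MvPolynomial (Fin n) ℤ :=
  ∏ p ∈ Finset.univ.filter (fun p : Fin n × Fin n => p.1 < p.2),
    (MvPolynomial.X p.1 - MvPolynomial.X p.2)

/-- The power sum `p_k` in `n` variables. -/
def psum (n k : ℕ) : MvPolynomial (Fin n) ℤ := ∑ i : Fin n, MvPolynomial.X i ^ k

/-- `p_μ` where `μ` is the full cycle type of `σ` (including fixed points). -/
def cyclePoly {n : ℕ} (σ : Equiv.Perm (Fin n)) : MvPolynomial (Fin n) ℤ :=
  (σ.cycleType.map fun k => psum n k).prod * psum n 1 ^ (n - σ.cycleType.sum)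

/-- The value `χ^ν(σ)` of the irreducible character of `S_n` indexed by `ν ⊢ n`,
via the Frobenius character formula: the coefficient of `x^{ν+δ}` in `a_δ · p_{μ(σ)}`. -/
def chiChar {n : ℕ} (ν : n.Partition) (σ : Equiv.Perm (Fin n)) : ℤ :=
  MvPolynomial.coeff
    (Finsupp.equivFunOnFinite.symm fun i : Fin n => partI ν i + (n - 1 - (i : ℕ)))
    (vand n * cyclePoly σ)

/-- The orbit of `p` under the cyclic group generated by `g`. -/
def orbitG {n : ℕ} (g : Equiv.Perm (Fin n)) (p : Fin n) : Finset (Fin n) :=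
  (Finset.range (n + 1)).image fun k => (g ^ k) p

lemma mem_orbitG_self {n : ℕ} (g : Equiv.Perm (Fin n)) (p : Fin n) : p ∈ orbitG g p :=
  Finset.mem_image.2 ⟨0, Finset.mem_range.2 (Nat.succ_pos n), by simp⟩

/-- A canonical representative of the `g`-cycle of `p` (the minimal point of the cycle). -/
def repG {n : ℕ} (g : Equiv.Perm (Fin n)) (p : Fin n) : Fin n :=
  (orbitG g p).min' ⟨p, mem_orbitG_self g p⟩

/-- The length of the `g`-cycle of `p`. -/
def lenG {n : ℕ} (g : Equiv.Perm (Fin n)) (p : Fin n) : ℕ := (orbitG g p).card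

open Classical in
/-- For `x` in the centralizer of `g`: the exponent `e` with
`x p = g^e (repG g (x p))`. -/
def expG {n : ℕ} (g x : Equiv.Perm (Fin n)) (p : Fin n) : ℕ :=
  if h : ((Finset.range (n + 1)).filter fun e => (g ^ e) (repG g (x p)) = x p).Nonempty
  then ((Finset.range (n + 1)).filter fun e => (g ^ e) (repG g (x p)) = x p).min' h
  else 0

open Classical in
/-- The value at `x` of the linear character `id_{m_1}[ζ_1^r] ⊗ id_{m_2}[ζ_2^r] ⊗ ⋯` of the
centralizer `Z_λ` of `g` (where `λ` is the cycle type of `g`); here `ζ_i` is the primitive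
character `ζ_i(g^e) = exp(2πi·e/i)` of the cyclic group generated by an `i`-cycle. -/
def xiG {n : ℕ} (r : ℤ) (g x : Equiv.Perm (Fin n)) : ℂ :=
  ∏ p ∈ Finset.univ.filter (fun p : Fin n => repG g p = p),
    Complex.exp (2 * Real.pi * Complex.I * (r : ℂ) * (expG g x p : ℂ) / (lenG g p : ℂ))

open Classical in
/-- The character of `S_n` induced from the linear character
`id_{m_1}[ζ_1^r] ⊗ id_{m_2}[ζ_2^r] ⊗ ⋯` of the centralizer `Z_λ` of `g`. -/
def indCharR {n : ℕ} (r : ℤ) (g : Equiv.Perm (Fin n)) (y : Equiv.Perm (Fin n)) : ℂ :=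
  (((Finset.univ.filter fun x : Equiv.Perm (Fin n) => Commute x g).card : ℂ))⁻¹ *
  ∑ x : Equiv.Perm (Fin n), if Commute (x⁻¹ * y * x) g then xiG r g (x⁻¹ * y * x) else 0

/-- The cycle type of `σ ∈ S_n`, as a partition of `n` (including fixed points). -/
def permPartition {n : ℕ} (σ : Equiv.Perm (Fin n)) : n.Partition :=
  Fintype.card_fin n ▸ σ.partition

open Classical in
/-- The character `ψ_r^λ` of `S_n`, induced from the linear character
`id_{m_1}[ζ_1^r] ⊗ id_{m_2}[ζ_2^r] ⊗ ⋯` of the centralizer of a permutation of cycle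
type `λ` (averaged over all such permutations; they all give the same induced
character). `r = 1` is the higher Lie character `ψ^λ`. -/
def psiHLr {n : ℕ} (r : ℤ) (lam : n.Partition) : Equiv.Perm (Fin n) → ℂ := fun y =>
  (((Finset.univ.filter fun g : Equiv.Perm (Fin n) => permPartition g = lam).card : ℂ))⁻¹ *
  ∑ g ∈ Finset.univ.filter (fun g : Equiv.Perm (Fin n) => permPartition g = lam),
      indCharR r g y

/-- The higher Lie character `ψ^λ` of `S_n`. -/
def psiHL {n : ℕ} (lam : n.Partition) : Equiv.Perm (Fin n) → ℂ := psiHLr 1 lam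

/-- The standard inner product of class functions on `S_n`. -/
def innerChar {n : ℕ} (α β : Equiv.Perm (Fin n) → ℂ) : ℂ :=
  ((n.factorial : ℂ))⁻¹ * ∑ σ : Equiv.Perm (Fin n), α σ * (starRingEnd ℂ) (β σ)

/-- The multiplicity `⟨ψ_r^λ, χ^ν⟩`. -/
def multPsiChiR {n : ℕ} (r : ℤ) (lam ν : n.Partition) : ℂ :=
  innerChar (psiHLr r lam) fun σ => (chiChar ν σ : ℂ)

/-- The multiplicity `⟨ψ^λ, χ^ν⟩` of the irreducible character `χ^ν` in the higher Lie
character `ψ^λ`. -/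
def multPsiChi {n : ℕ} (lam ν : n.Partition) : ℂ := multPsiChiR 1 lam ν

/-- `z_λ = ∏_i i^{m_i}·m_i!`, the order of the centralizer of a permutation of cycle type `λ`. -/
def zPart {n : ℕ} (lam : n.Partition) : ℕ :=
  lam.parts.prod * ∏ i ∈ lam.parts.toFinset, (lam.parts.count i).factorial

/-- A sequence of partitions `ν i ⊢ N i` is balanced if first rows and first columns
are `O(√(N i))`. -/
def BalancedSeq {N : ℕ → ℕ} (ν : ∀ i, (N i).Partition) : Prop :=
  ∃ C : ℝ, 0 < C ∧ ∀ i,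
    (partI (ν i) 0 : ℝ) ≤ C * Real.sqrt (N i) ∧ (numParts (ν i) : ℝ) ≤ C * Real.sqrt (N i)

/-- The one-row partition `(n)`. -/
def onerow (n : ℕ) : n.Partition :=
  if h : n = 0 then ⟨0, by simp, by simp [h]⟩
  else ⟨{n}, by
    intro i hi
    rw [Multiset.mem_singleton] at hi
    subst hi
    exact Nat.pos_of_ne_zero h, by simp⟩

/-- The rectangular partition `(m^k)`. -/
def rect (m k : ℕ) : (m * k).Partition :=
  if h : m = 0 then ⟨0, by simp, by simp [h]⟩
  else ⟨Multiset.replicate k m,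
    by intro i hi; rw [Multiset.eq_of_mem_replicate hi]; exact Nat.pos_of_ne_zero h,
    by rw [Multiset.sum_replicate, smul_eq_mul, Nat.mul_comm]⟩

/-- The hook partition `(n-k, 1^k)` (junk value if `k ≥ n`). -/
def hook (n k : ℕ) : n.Partition :=
  if h : k < n then
    ⟨(n - k) ::ₘ Multiset.replicate k 1,
      by
        intro i hi
        rcases Multiset.mem_cons.1 hi with h1 | h1
        · subst h1; omega
        · rw [Multiset.eq_of_mem_replicate h1]; omega,
      by
        rw [Multiset.sum_cons, Multiset.sum_replicate, smul_eq_mul, mul_one]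
        omega⟩
  else onerow n

/-- The disjoint union of two partitions. -/
def glueP {a b : ℕ} (μ : a.Partition) (τ : b.Partition) : (a + b).Partition :=
  ⟨μ.parts + τ.parts,
    by intro i hi; rcases Multiset.mem_add.1 hi with h1 | h1
       exacts [μ.parts_pos h1, τ.parts_pos h1],
    by rw [Multiset.sum_add, μ.parts_sum, τ.parts_sum]⟩

/-- The probability of an event under the uniform distribution on `S_n`. -/
def probPerm (n : ℕ) (P : Equiv.Perm (Fin n) → Prop) : ℝ :=
  (Set.ncard {σ : Equiv.Perm (Fin n) | P σ} : ℝ) / n.factorial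

/-- The relative error `R` defined by `⟨ψ^{λ(σ)}, χ^ν⟩ = (f^ν/z_{λ(σ)})(1+R)`. -/
def Rterm {n : ℕ} (σ : Equiv.Perm (Fin n)) (ν : n.Partition) : ℂ :=
  multPsiChi (permPartition σ) ν * (zPart (permPartition σ) : ℂ) / (fSYT ν : ℂ) - 1

end HLC

/-!
Double counting. Call `h : Fin m ⊕ Fin m ↪ α` compatible with `σ` if `σ` acts on the range of
`h` as `blockRotation m`, the rotation of both copies of `Fin m`. For fixed `h` the compatible
`σ` form a coset of the permutations fixing the range of `h`, so there are `(n - 2m)!` of them;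
summing over the `n! / (n - 2m)!` embeddings gives exactly `n!` compatible pairs. Conversely, a
compatible `h` is an ordered pair of points on distinct `m`-cycles of `σ`, marked as starting
points; if `σ` has at least two `m`-cycles there are at least `2m²` such pairs. Points on
`m`-cycles are those of period `m`, which makes fixed points the `1`-cycles.
-/

open Finset Function

namespace MulAction

theorem period_eq_of_forall_pow_smul_eq_iff {M α : Type*} [Monoid M] [MulAction M α] {m : M}
    {a : α} {k : ℕ} (h : ∀ n, m ^ n • a = a ↔ k ∣ n) : period m a = k :=
  Nat.dvd_antisymm (pow_smul_eq_iff_period_dvd.1 ((h k).2 dvd_rfl))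
    ((h _).1 (pow_period_smul m a))

theorem period_pow_smul {G α : Type*} [Group G] [MulAction G α] (g : G) (a : α) (k : ℕ) :
    period g (g ^ k • a) = period g a :=
  period_eq_of_forall_pow_smul_eq_iff fun n => by
    rw [smul_smul, ← pow_add, add_comm, pow_add, mul_smul, smul_left_cancel_iff,
      pow_smul_eq_iff_period_dvd]

theorem pow_smul_injOn_Iio_period {M α : Type*} [Monoid M] [MulAction M α] (m : M) (a : α) :
    (Set.Iio (period m a)).InjOn fun n => m ^ n • a := by
  rw [period_eq_minimalPeriod]
  simpa only [smul_iterate] using iterate_injOn_Iio_minimalPeriod (f := (m • ·)) (x := a)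

end MulAction

theorem Nat.Partition.parts_cast {a b : ℕ} (h : a = b) (P : a.Partition) :
    (h ▸ P).parts = P.parts := by
  subst h
  rfl

instance Function.decidableSemiconj {ι α : Type*} [Fintype ι] [DecidableEq α] (f : ι → α)
    (g : ι → ι) (k : α → α) : Decidable (Semiconj f g k) :=
  Fintype.decidableForallFintype

namespace Equiv.Perm

open MulAction (period)

variable {α : Type*}

section Cycles

variable [Fintype α] [DecidableEq α]

theorem period_eq_card_support_of_mem_cycleFactorsFinset {σ c : Perm α}
    (hc : c ∈ σ.cycleFactorsFinset) {x : α} (hx : x ∈ c.support) :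
    period σ x = #c.support := by
  obtain rfl := cycle_is_cycleOf hx hc
  refine MulAction.period_eq_of_forall_pow_smul_eq_iff fun n => ?_
  rw [Perm.smul_def, (isCycleOn_support_cycleOf σ x).pow_apply_eq hx]

theorem exists_period_eq_of_two_le_count {σ : Perm α} {m : ℕ}
    (h : 2 ≤ σ.partition.parts.count m) :
    ∃ x y, period σ x = m ∧ period σ y = m ∧ ¬ σ.SameCycle x y := by
  rw [parts_partition, Multiset.count_add, Multiset.count_replicate] at h
  by_cases hm : m = 1
  · subst hm
    have hct : σ.cycleType.count 1 = 0 :=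
      Multiset.count_eq_zero.2 fun h1 => by have := two_le_of_mem_cycleType h1; omega
    rw [hct, if_pos rfl, zero_add] at h
    have hfix : 1 < #σ.supportᶜ := by rw [card_compl]; omega
    obtain ⟨x, hx, y, hy, hxy⟩ := one_lt_card.1 hfix
    rw [mem_compl, notMem_support] at hx hy
    exact ⟨x, y, MulAction.period_eq_one_iff.2 hx, MulAction.period_eq_one_iff.2 hy,
      fun hs => hxy (hs.eq_of_left hx)⟩
  · rw [if_neg (Ne.symm hm), add_zero, cycleType_def, Multiset.count_map] at h
    obtain ⟨c, hc, d, hd, hcd⟩ :=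
      one_lt_card.1 (show 1 < #(σ.cycleFactorsFinset.filter (m = #·.support)) from h)
    rw [mem_filter] at hc hd
    obtain ⟨x, hx⟩ := (mem_cycleFactorsFinset_iff.1 hc.1).1.nonempty_support
    obtain ⟨y, hy⟩ := (mem_cycleFactorsFinset_iff.1 hd.1).1.nonempty_support
    refine ⟨x, y, hc.2 ▸ period_eq_card_support_of_mem_cycleFactorsFinset hc.1 hx,
      hd.2 ▸ period_eq_card_support_of_mem_cycleFactorsFinset hd.1 hy, fun hxy => hcd ?_⟩
    rw [cycle_is_cycleOf hx hc.1, cycle_is_cycleOf hy hd.1, hxy.cycleOf_eq]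

end Cycles

section Semiconj

variable [Fintype α] [DecidableEq α] {ι : Type*} [Fintype ι]

theorem card_filter_semiconj (q : Perm ι) (h : ι ↪ α) :
    #{σ : Perm α | Semiconj h q σ} = (Fintype.card α - Fintype.card ι).factorial := by
  set σ₀ := q.viaEmbedding h
  have hσ₀ : Semiconj h q σ₀ := fun x => (viaEmbedding_apply q h x).symm
  let e : {σ : Perm α // Semiconj h q σ} ≃ {τ : Perm α // ∀ a, ¬ a ∉ Set.range h → τ a = a} :=
    { toFun := fun σ => ⟨σ₀⁻¹ * σ, by
        intro a ha
        obtain ⟨x, rfl⟩ := not_not.1 ha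
        rw [mul_apply, ← σ.2 x, hσ₀ x]
        exact σ₀.symm_apply_apply _⟩
      invFun := fun τ => ⟨σ₀ * τ, fun x => by
        rw [mul_apply, τ.2 (h x) (not_not.2 ⟨x, rfl⟩), hσ₀ x]⟩
      left_inv := fun σ => by simp
      right_inv := fun τ => by simp }
  have hcompl : Fintype.card {a // a ∉ Set.range h} = Fintype.card α - Fintype.card ι := by
    rw [Fintype.card_subtype_compl, Fintype.card_range]
  rw [← Fintype.card_subtype, Fintype.card_congr (e.trans (Perm.subtypeEquivSubtypePerm _).symm),
    Fintype.card_perm, hcompl]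

theorem sum_card_filter_semiconj (q : Perm ι) (hι : Fintype.card ι ≤ Fintype.card α) :
    ∑ σ : Perm α, #{h : ι ↪ α | Semiconj h q σ} = (Fintype.card α).factorial := by
  simp only [card_filter]
  rw [sum_comm]
  simp only [← card_filter, card_filter_semiconj, sum_const, card_univ,
    Fintype.card_embedding_eq, smul_eq_mul]
  rw [mul_comm, Nat.factorial_mul_descFactorial hι]

end Semiconj

def blockRotation (m : ℕ) [NeZero m] : Perm (Fin m ⊕ Fin m) :=
  sumCongr (Equiv.addRight 1) (Equiv.addRight 1)

section Blocks

variable {m : ℕ} {σ : Perm α} {u v : α}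

theorem semiconj_pow_apply [NeZero m] (hu : period σ u = m) :
    Semiconj (fun i : Fin m => (σ ^ (i : ℕ)) u) (Equiv.addRight 1) σ := fun i => by
  have h := MulAction.pow_mod_period_smul ((i : ℕ) + 1) (m := σ) (a := u)
  rw [hu] at h
  show (σ ^ ((i + 1 : Fin m) : ℕ)) u = σ ((σ ^ (i : ℕ)) u)
  rw [← mul_apply, ← pow_succ', Fin.val_add, Fin.val_one', Nat.add_mod_mod]
  exact h

theorem injective_pow_apply (hu : period σ u = m) :
    Injective fun i : Fin m => (σ ^ (i : ℕ)) u := fun i j hij =>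
  Fin.ext (MulAction.pow_smul_injOn_Iio_period σ u (hu ▸ i.2) (hu ▸ j.2) hij)

theorem card_image_pow_apply_range [DecidableEq α] (hu : period σ u = m) :
    #((range m).image fun k => (σ ^ k) u) = m := by
  rw [card_image_of_injOn, card_range]
  rw [coe_range, ← hu]
  exact MulAction.pow_smul_injOn_Iio_period σ u

theorem exists_semiconj_blockRotation [NeZero m] (hu : period σ u = m) (hv : period σ v = m)
    (huv : ¬ σ.SameCycle u v) :
    ∃ h : Fin m ⊕ Fin m ↪ α, Semiconj h (blockRotation m) σ ∧ h (.inl 0) = u ∧ h (.inr 0) = v := by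
  refine ⟨⟨Sum.elim (fun i : Fin m => (σ ^ (i : ℕ)) u) (fun i : Fin m => (σ ^ (i : ℕ)) v),
    (injective_pow_apply hu).sumElim (injective_pow_apply hv) fun i j hij =>
      huv (sameCycle_pow_left.1 (sameCycle_pow_right.1 (hij.sameCycle σ)))⟩, ?_, by simp, by simp⟩
  rintro (i | i)
  · exact semiconj_pow_apply hu i
  · exact semiconj_pow_apply hv i

end Blocks

section Count

variable [Fintype α] [DecidableEq α]

def distinctCyclePairs (σ : Perm α) (m : ℕ) : Finset (α × α) :=
  {p | period σ p.1 = m ∧ period σ p.2 = m ∧ ¬ σ.SameCycle p.1 p.2}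

theorem two_mul_sq_le_card_distinctCyclePairs {σ : Perm α} {m : ℕ}
    (h : 2 ≤ σ.partition.parts.count m) :
    2 * m ^ 2 ≤ #(distinctCyclePairs σ m) := by
  obtain ⟨x, y, hx, hy, hxy⟩ := exists_period_eq_of_two_le_count h
  set O : α → Finset α := fun z => (range m).image fun k => (σ ^ k) z
  have hprod : ∀ a b, period σ a = m → period σ b = m → ¬ σ.SameCycle a b →
      O a ×ˢ O b ⊆ distinctCyclePairs σ m := by
    intro a b ha hb hab p hp
    obtain ⟨⟨k, -, hk⟩, ⟨l, -, hl⟩⟩ := by simpa only [mem_product, mem_image, O] using hp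
    rw [distinctCyclePairs, mem_filter, ← hk, ← hl, sameCycle_pow_left, sameCycle_pow_right]
    exact ⟨mem_univ _, (MulAction.period_pow_smul σ a k).trans ha,
      (MulAction.period_pow_smul σ b l).trans hb, hab⟩
  have hdisj : _root_.Disjoint (O x) (O y) := by
    simp only [disjoint_left, mem_image, O]
    rintro _ ⟨k, -, rfl⟩ ⟨l, -, hl⟩
    exact hxy (sameCycle_pow_left.1 (sameCycle_pow_right.1 (hl.sameCycle σ).symm))
  calc 2 * m ^ 2 = #(O x ×ˢ O y ∪ O y ×ˢ O x) := by
        rw [card_union_of_disjoint (disjoint_product.2 (.inl hdisj)), card_product, card_product,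
          card_image_pow_apply_range hx, card_image_pow_apply_range hy]
        ring
    _ ≤ _ := card_le_card (union_subset (hprod x y hx hy hxy)
        (hprod y x hy hx fun h => hxy h.symm))

theorem card_distinctCyclePairs_le_card_filter_semiconj {m : ℕ} [NeZero m] (σ : Perm α) :
    #(distinctCyclePairs σ m)
      ≤ #{h : Fin m ⊕ Fin m ↪ α | Semiconj h (blockRotation m) σ} :=
  card_le_card_of_surjOn (fun h => (h (.inl 0), h (.inr 0))) fun p hp => by
    rw [distinctCyclePairs, coe_filter] at hp
    obtain ⟨-, hu, hv, huv⟩ := hp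
    obtain ⟨h, hh, h0, h1⟩ := exists_semiconj_blockRotation hu hv huv
    exact ⟨h, by simpa using hh, Prod.ext h0 h1⟩

theorem two_mul_sq_mul_card_le_factorial {m : ℕ} [NeZero m] (hm : 2 * m ≤ Fintype.card α) :
    2 * m ^ 2 * #{σ : Perm α | 2 ≤ σ.partition.parts.count m} ≤ (Fintype.card α).factorial :=
  calc 2 * m ^ 2 * #{σ : Perm α | 2 ≤ σ.partition.parts.count m}
      = ∑ σ ∈ {σ : Perm α | 2 ≤ σ.partition.parts.count m}, 2 * m ^ 2 := by
        rw [sum_const, smul_eq_mul, mul_comm]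
    _ ≤ ∑ σ ∈ {σ : Perm α | 2 ≤ σ.partition.parts.count m},
          #{h : Fin m ⊕ Fin m ↪ α | Semiconj h (blockRotation m) σ} :=
        sum_le_sum fun σ hσ => (two_mul_sq_le_card_distinctCyclePairs (mem_filter.1 hσ).2).trans
          (card_distinctCyclePairs_le_card_filter_semiconj σ)
    _ ≤ ∑ σ : Perm α, #{h : Fin m ⊕ Fin m ↪ α | Semiconj h (blockRotation m) σ} :=
        sum_le_sum_of_subset (subset_univ _)
    _ = (Fintype.card α).factorial :=
        sum_card_filter_semiconj _ (by simpa [Fintype.card_sum, two_mul] using hm)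

end Count

end Equiv.Perm

open HLC in
theorem count_two_cycles_of_length_le_general (n m : ℕ) (hm : 0 < m)
    (h2m : 2 * m ≤ n) :
    (Set.ncard {σ : Equiv.Perm (Fin n) |
        2 ≤ Multiset.count m (permPartition σ).parts} : ℝ)
      ≤ (n.factorial : ℝ) / (2 * m ^ 2) ∧
    probPerm n (fun σ => 2 ≤ Multiset.count m (permPartition σ).parts) ≤ 1 / m ^ 2 := by
  have : NeZero m := ⟨hm.ne'⟩
  set S := {σ : Equiv.Perm (Fin n) | 2 ≤ Multiset.count m (permPartition σ).parts}
  have hS : S = ↑({σ : Equiv.Perm (Fin n) | 2 ≤ σ.partition.parts.count m} : Finset _) := by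
    ext σ
    simp [S, permPartition, Nat.Partition.parts_cast]
  have hcard : (S.ncard : ℝ) ≤ n.factorial / (2 * m ^ 2) := by
    have h := Equiv.Perm.two_mul_sq_mul_card_le_factorial (α := Fin n) (m := m)
      (by simpa using h2m)
    rw [le_div_iff₀ (by positivity), hS, Set.ncard_coe_finset, mul_comm]
    exact_mod_cast h.trans_eq (congrArg Nat.factorial (Fintype.card_fin n))
  refine ⟨hcard, ?_⟩
  calc probPerm n (fun σ => 2 ≤ Multiset.count m (permPartition σ).parts)
      = S.ncard / n.factorial := rfl
    _ ≤ n.factorial / (2 * m ^ 2) / n.factorial := by gcongr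
    _ = 1 / (2 * m ^ 2) := by field_simp
    _ ≤ 1 / m ^ 2 := by gcongr; linarith [sq_nonneg (m : ℝ)]

open HLC in
/-- For positive integers `n, m` with `2m ≤ n`, the number of permutations in `S_n` having
at least two cycles of length `m` is at most `n!/(2m²)`; consequently the probability that
a uniformly random permutation in `S_n` has at least two cycles of length `m` is at most
`1/m²`. (The number of cycles of `σ` of length `m` is the multiplicity of `m` in the
cycle-type partition `λ(σ)`.) -/
theorem count_two_cycles_of_length_le (n m : ℕ) (hn : 0 < n) (hm : 0 < m)
    (h2m : 2 * m ≤ n) :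
    (Set.ncard {σ : Equiv.Perm (Fin n) |
        2 ≤ Multiset.count m (permPartition σ).parts} : ℝ)
      ≤ (n.factorial : ℝ) / (2 * m ^ 2) ∧
    probPerm n (fun σ => 2 ≤ Multiset.count m (permPartition σ).parts) ≤ 1 / m ^ 2 :=
  count_two_cycles_of_length_le_general n m hm h2m
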